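/- The q-quasi-bi^s-nomial coefficients QB_s(n,k), defined by the recurrence QB_s(n,k) = QB_s(n-1,k) + ∑_{j=1}^{s} q^{n-j} QB_s(n-j, k-1), also satisfy the second recurrence: for all n ≥ 1 and 0 ≤ k ≤ n, QB_s(n,k) = q^{k} · QB_s(n-1, k) + ∑_{j=1}^{s} q^{(k-1)j} · QB_s(n-j, k-1), where q^{(k-1)j} is an integer power in the field ℚ(q) (for k = 0 the corresponding terms vanish since QB_s(n-j, -1) = 0). -/
import Mathlib


/-- The q-quasi-bi^s-nomial coefficients `QB_s(n,k) ∈ ℚ(q)` (here `q = RatFunc.X`):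
`QB_s(n,k) = 0` for `k < 0` or `k > n`, `QB_s(0,0) = 1`, and for `n ≥ 1`, `0 ≤ k ≤ n`,
`QB_s(n,k) = QB_s(n-1,k) + ∑_{j=1}^{s} q^{n-j} QB_s(n-j,k-1)` (terms with `n-j < 0`
being zero). -/
noncomputable def QB (s : ℕ) : ℕ → ℤ → RatFunc ℚ
  | 0, k => if k = 0 then 1 else 0
  | n+1, k =>
    if k < 0 ∨ (n+1 : ℤ) < k then 0
    else QB s n k +
      ∑ j ∈ Finset.range s, if j ≤ n then RatFunc.X ^ (n - j) * QB s (n - j) (k - 1) else 0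
  termination_by n _ => n
  decreasing_by all_goals omega

/-- `QB_s(n,k)` extended by zero to negative `n`. -/
noncomputable def QBZ (s : ℕ) (n k : ℤ) : RatFunc ℚ :=
  if n < 0 then 0 else QB s n.toNat k

lemma QB_eq_zero (s : ℕ) : ∀ (n : ℕ) (k : ℤ), (k < 0 ∨ (n:ℤ) < k) → QB s n k = 0
  | 0, k, h => by simp [QB]; omega
  | n+1, k, h => by rw [QB, if_pos (by push_cast at h ⊢; omega : k < 0 ∨ (n:ℤ)+1 < k)]

lemma QBZ_eq_zero (s : ℕ) (n k : ℤ) (h : k < 0 ∨ n < k) : QBZ s n k = 0 := by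
  unfold QBZ
  split
  · rfl
  · exact QB_eq_zero s n.toNat k (by omega)

lemma QBZ_neg (s : ℕ) (n k : ℤ) (h : n < 0) : QBZ s n k = 0 := by
  unfold QBZ; rw [if_pos h]

lemma QBZ_ofNat (s : ℕ) (n : ℕ) (k : ℤ) : QBZ s n k = QB s n k := by
  simp [QBZ]

lemma QBZ_zero (s : ℕ) (k : ℤ) : QBZ s 0 k = if k = 0 then 1 else 0 := by
  have := QBZ_ofNat s 0 k
  simpa [QB] using this

lemma R1Z (s : ℕ) (n k : ℤ) (hn : 1 ≤ n) :
    QBZ s n k = QBZ s (n-1) k +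
      ∑ j ∈ Finset.Icc 1 s, RatFunc.X ^ (n - j) * QBZ s (n - j) (k-1) := by
  obtain ⟨m, rfl⟩ : ∃ m : ℕ, n = (m:ℤ)+1 := ⟨(n-1).toNat, by omega⟩
  have hL : QBZ s ((m:ℤ)+1) k = QB s (m+1) k := by
    have := QBZ_ofNat s (m+1) k; push_cast at this; rw [this]
  rw [hL]
  by_cases hg : k < 0 ∨ ((m:ℤ)+1) < k
  · rw [QB, if_pos hg]
    rw [show ((m:ℤ)+1-1) = (m:ℤ) by ring, QBZ_ofNat, QB_eq_zero s m k (by omega)]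
    rw [Finset.sum_eq_zero, add_zero]
    intro j hj
    simp only [Finset.mem_Icc] at hj
    rw [QBZ_eq_zero s _ (k-1) (by omega), mul_zero]
  · rw [QB, if_neg hg]
    congr 1
    · rw [show ((m:ℤ)+1-1) = (m:ℤ) by ring, QBZ_ofNat]
    · rw [show Finset.Icc 1 s = Finset.Ico 1 (s+1) by rw [Finset.Ico_add_one_right_eq_Icc],
         Finset.sum_Ico_eq_sum_range]
      simp only [Nat.add_sub_cancel]
      apply Finset.sum_congr rfl
      intro i hi
      simp only [Finset.mem_range] at hi
      by_cases him : i ≤ m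
      · rw [if_pos him]
        have h1 : ((m:ℤ)+1) - (1+i) = ((m - i : ℕ) : ℤ) := by push_cast; omega
        push_cast
        rw [show ((m:ℤ)+1) - (1+(i:ℤ)) = ((m - i : ℕ) : ℤ) by push_cast; omega]
        rw [QBZ_ofNat, zpow_natCast]
      · rw [if_neg him, QBZ_neg s _ _ (by push_cast; omega), mul_zero]

noncomputable def Sx (s : ℕ) (k n : ℤ) : RatFunc ℚ :=
  ∑ j ∈ Finset.Icc 1 s, RatFunc.X ^ ((k - 1) * j) * QBZ s (n - j) (k - 1)

lemma X_ne : (RatFunc.X : RatFunc ℚ) ≠ 0 := RatFunc.X_ne_zero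

lemma lemA (s : ℕ) (n : ℕ) (hn : 1 ≤ n) (k : ℤ) :
    Sx s k n = Sx s k ((n:ℤ)-1)
      + (∑ j ∈ Finset.Icc 1 s, RatFunc.X ^ ((n:ℤ) - j) * Sx s (k-1) ((n:ℤ) - j))
      + (if n ≤ s ∧ k = 1 then 1 else 0) := by
  have key : ∀ j ∈ Finset.Icc 1 s,
      RatFunc.X ^ ((k - 1) * (j:ℤ)) * QBZ s ((n:ℤ) - j) (k - 1)
      = RatFunc.X ^ ((k - 1) * (j:ℤ)) * QBZ s ((n:ℤ) - 1 - j) (k - 1)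
        + (∑ i ∈ Finset.Icc 1 s,
            RatFunc.X ^ ((n:ℤ) + (k-2) * j - i) * QBZ s ((n:ℤ) - j - i) (k - 2))
        + (if j = n ∧ k = 1 then 1 else 0) := by
    intro j hj
    simp only [Finset.mem_Icc] at hj
    have hz : ∀ m : ℤ, m < 0 → ∀ k' : ℤ, QBZ s m k' = 0 := fun m hm k' => QBZ_neg s m k' hm
    rcases lt_trichotomy ((n:ℤ) - j) 0 with hlt | heq | hgt
    · have e1 : QBZ s ((n:ℤ) - j) (k-1) = 0 := hz _ hlt _
      have e2 : QBZ s ((n:ℤ) - 1 - j) (k-1) = 0 := hz _ (by omega) _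
      have e3 : (∑ i ∈ Finset.Icc 1 s,
          RatFunc.X ^ ((n:ℤ) + (k-2) * j - i) * QBZ s ((n:ℤ) - j - i) (k - 2)) = 0 :=
        Finset.sum_eq_zero fun i hi => by
          rw [hz _ (by simp only [Finset.mem_Icc] at hi; omega) _, mul_zero]
      rw [e1, e2, e3, if_neg (by omega)]
      simp
    · -- j = n
      have hjn : j = n := by omega
      have e1 : QBZ s ((n:ℤ) - j) (k-1) = if k - 1 = 0 then 1 else 0 := by
        rw [heq, QBZ_zero]
      have e2 : QBZ s ((n:ℤ) - 1 - j) (k-1) = 0 := hz _ (by omega) _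
      have e3 : (∑ i ∈ Finset.Icc 1 s,
          RatFunc.X ^ ((n:ℤ) + (k-2) * j - i) * QBZ s ((n:ℤ) - j - i) (k - 2)) = 0 :=
        Finset.sum_eq_zero fun i hi => by
          rw [hz _ (by simp only [Finset.mem_Icc] at hi; omega) _, mul_zero]
      rw [e1, e2, e3, mul_zero]
      by_cases hk1 : k = 1
      · rw [if_pos (by omega : k - 1 = 0), if_pos ⟨hjn, hk1⟩, hk1]
        norm_num
      · rw [if_neg (by omega : ¬ k - 1 = 0), if_neg (by tauto), mul_zero]
        ring
    · -- n - j ≥ 1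
      rw [R1Z s ((n:ℤ) - j) (k-1) (by omega), if_neg (by
          rintro ⟨h1, -⟩
          omega),
        add_zero, mul_add, Finset.mul_sum]
      congr 1
      · rw [show (n:ℤ) - j - 1 = (n:ℤ) - 1 - j by ring]
      · apply Finset.sum_congr rfl
        intro i _
        rw [← mul_assoc, ← zpow_add₀ X_ne,
          show (k-1) * (j:ℤ) + ((n:ℤ) - j - i) = (n:ℤ) + (k-2)*j - i by ring,
          show k - 1 - 1 = k - 2 by ring]
  have hswap : (∑ j ∈ Finset.Icc 1 s, ∑ i ∈ Finset.Icc 1 s,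
        RatFunc.X ^ ((n:ℤ) + (k-2) * j - i) * QBZ s ((n:ℤ) - j - i) (k - 2))
      = ∑ j ∈ Finset.Icc 1 s, RatFunc.X ^ ((n:ℤ) - j) * Sx s (k-1) ((n:ℤ) - j) := by
    rw [Finset.sum_comm]
    apply Finset.sum_congr rfl
    intro i _
    rw [Sx, Finset.mul_sum]
    apply Finset.sum_congr rfl
    intro j _
    rw [← mul_assoc, ← zpow_add₀ X_ne,
      show ((n:ℤ) - i) + (k - 1 - 1) * j = (n:ℤ) + (k-2)*j - i by ring,
      show (n:ℤ) - i - j = (n:ℤ) - j - i by ring,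
      show k - 1 - 1 = k - 2 by ring]
  have hdelta : (∑ j ∈ Finset.Icc 1 s, (if j = n ∧ k = 1 then (1 : RatFunc ℚ) else 0))
      = if n ≤ s ∧ k = 1 then 1 else 0 := by
    by_cases hk1 : k = 1
    · simp only [hk1, and_true]
      rw [Finset.sum_ite_eq' (Finset.Icc 1 s) n (fun _ => (1 : RatFunc ℚ))]
      simp only [Finset.mem_Icc]
      congr 1
      simp only [eq_iff_iff]
      omega
    · simp [hk1]
  calc Sx s k n = ∑ j ∈ Finset.Icc 1 s,
        (RatFunc.X ^ ((k - 1) * (j:ℤ)) * QBZ s ((n:ℤ) - 1 - j) (k - 1)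
        + (∑ i ∈ Finset.Icc 1 s,
            RatFunc.X ^ ((n:ℤ) + (k-2) * j - i) * QBZ s ((n:ℤ) - j - i) (k - 2))
        + (if j = n ∧ k = 1 then 1 else 0)) := Finset.sum_congr rfl key
    _ = _ := by
        rw [Finset.sum_add_distrib, Finset.sum_add_distrib, hswap, hdelta]
        rfl

noncomputable def Dx (s : ℕ) (n k : ℤ) : RatFunc ℚ :=
  QBZ s n k - RatFunc.X ^ k * QBZ s (n-1) k - Sx s k n

lemma Dx_neg (s : ℕ) (n k : ℤ) (h : n < 0) : Dx s n k = 0 := by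
  unfold Dx Sx
  rw [QBZ_neg s _ _ h, QBZ_neg s _ _ (by omega), Finset.sum_eq_zero fun j hj => by
    rw [QBZ_neg s _ _ (by simp only [Finset.mem_Icc] at hj; omega), mul_zero]]
  simp

lemma Dx_zero (s : ℕ) (k : ℤ) : Dx s 0 k = if k = 0 then 1 else 0 := by
  unfold Dx Sx
  rw [QBZ_zero, QBZ_neg s _ _ (by omega), Finset.sum_eq_zero fun j hj => by
    rw [QBZ_neg s _ _ (by simp only [Finset.mem_Icc] at hj; omega), mul_zero]]
  simp

lemma Dx_one (s : ℕ) (hs : 1 ≤ s) (k : ℤ) : Dx s 1 k = 0 := by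
  have h1 : (1 : ℕ) ∈ Finset.Icc 1 s := by simp [hs]
  have hsum : (∑ j ∈ Finset.Icc 1 s, RatFunc.X ^ ((1:ℤ) - j) * QBZ s ((1:ℤ) - j) (k-1))
      = QBZ s 0 (k-1) := by
    rw [Finset.sum_eq_single_of_mem 1 h1 (fun j hj hne => by
      rw [QBZ_neg s _ _ (by
        simp only [Finset.mem_Icc] at hj
        omega), mul_zero])]
    norm_num
  have hS : Sx s k 1 = RatFunc.X ^ (k - 1) * QBZ s 0 (k-1) := by
    rw [Sx, Finset.sum_eq_single_of_mem 1 h1 (fun j hj hne => by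
      rw [QBZ_neg s _ _ (by
        simp only [Finset.mem_Icc] at hj
        omega), mul_zero])]
    norm_num
  unfold Dx
  rw [R1Z s 1 k (by omega), hsum, hS]
  norm_num
  rw [QBZ_zero, QBZ_zero]
  by_cases h0 : k = 0
  · subst h0; norm_num
  · by_cases h1 : k = 1
    · subst h1; norm_num
    · rw [if_neg h0, if_neg (by omega)]
      simp

lemma lemB (s : ℕ) (n : ℕ) (hn : 2 ≤ n) (k : ℤ) :
    Dx s n k = Dx s ((n:ℤ)-1) k
      + (∑ j ∈ Finset.Icc 1 s, RatFunc.X ^ ((n:ℤ) - j) * Dx s ((n:ℤ) - j) (k-1))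
      - (if n ≤ s ∧ k = 1 then 1 else 0) := by
  have e1 := R1Z s n k (by omega)
  have e2 := R1Z s ((n:ℤ)-1) k (by omega)
  have eA := lemA s n (by omega) k
  -- cross term equality
  have hcross : (∑ j ∈ Finset.Icc 1 s, RatFunc.X ^ ((n:ℤ)-1 - j) * QBZ s ((n:ℤ)-1 - j) (k-1))
        = ∑ j ∈ Finset.Icc 1 s, RatFunc.X ^ (-(1:ℤ)) *
            (RatFunc.X ^ ((n:ℤ) - j) * QBZ s ((n:ℤ) - j - 1) (k-1)) := by
    apply Finset.sum_congr rfl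
    intro j _
    rw [← mul_assoc, ← zpow_add₀ X_ne,
      show -(1:ℤ) + ((n:ℤ) - j) = (n:ℤ) - 1 - j by ring,
      show (n:ℤ) - j - 1 = (n:ℤ) - 1 - j by ring]
  simp only [Dx]
  rw [e1, e2, eA]
  rw [hcross]
  rw [mul_add, Finset.mul_sum]
  -- expand RHS sum of Dx
  have hrhs : (∑ j ∈ Finset.Icc 1 s, RatFunc.X ^ ((n:ℤ) - j) *
      (QBZ s ((n:ℤ)-j) (k-1) - RatFunc.X ^ (k-1) * QBZ s ((n:ℤ)-j-1) (k-1) - Sx s (k-1) ((n:ℤ)-j)))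
      = (∑ j ∈ Finset.Icc 1 s, RatFunc.X ^ ((n:ℤ) - j) * QBZ s ((n:ℤ)-j) (k-1))
        - (∑ j ∈ Finset.Icc 1 s, RatFunc.X ^ ((n:ℤ) - j) * (RatFunc.X ^ (k-1) * QBZ s ((n:ℤ)-j-1) (k-1)))
        - (∑ j ∈ Finset.Icc 1 s, RatFunc.X ^ ((n:ℤ) - j) * Sx s (k-1) ((n:ℤ)-j)) := by
    rw [← Finset.sum_sub_distrib, ← Finset.sum_sub_distrib]
    apply Finset.sum_congr rfl
    intro j _
    ring
  rw [hrhs]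
  have hxk : ∀ j : ℕ, RatFunc.X ^ k * (RatFunc.X ^ (-(1:ℤ)) *
      (RatFunc.X ^ ((n:ℤ) - j) * QBZ s ((n:ℤ) - j - 1) (k-1)))
      = RatFunc.X ^ ((n:ℤ) - j) * (RatFunc.X ^ (k-1) * QBZ s ((n:ℤ)-j-1) (k-1)) := by
    intro j
    rw [← mul_assoc, ← mul_assoc, ← zpow_add₀ X_ne, ← zpow_add₀ X_ne, ← mul_assoc,
      ← zpow_add₀ X_ne]
    ring_nf
  have hsum2 : (∑ j ∈ Finset.Icc 1 s, RatFunc.X ^ k * (RatFunc.X ^ (-(1:ℤ)) *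
      (RatFunc.X ^ ((n:ℤ) - j) * QBZ s ((n:ℤ) - j - 1) (k-1))))
      = ∑ j ∈ Finset.Icc 1 s, RatFunc.X ^ ((n:ℤ) - j) * (RatFunc.X ^ (k-1) * QBZ s ((n:ℤ)-j-1) (k-1)) :=
    Finset.sum_congr rfl fun j _ => hxk j
  rw [hsum2]
  ring

lemma Dx_eq_zero (s : ℕ) (hs : 1 ≤ s) : ∀ n : ℕ, 1 ≤ n → ∀ k : ℤ, Dx s n k = 0 := by
  intro n
  induction n using Nat.strong_induction_on with
  | _ n ih =>
    intro hn k
    rcases eq_or_lt_of_le hn with h1 | h2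
    · rw [← h1]; exact Dx_one s hs k
    · -- n ≥ 2
      have hn2 : 2 ≤ n := h2
      rw [lemB s n hn2 k]
      have hprev : Dx s ((n:ℤ)-1) k = 0 := by
        rw [show (n:ℤ)-1 = ((n-1 : ℕ) : ℤ) by omega]
        exact ih (n-1) (by omega) (by omega) k
      have hsum : (∑ j ∈ Finset.Icc 1 s, RatFunc.X ^ ((n:ℤ) - j) * Dx s ((n:ℤ) - j) (k-1))
          = if n ≤ s ∧ k = 1 then 1 else 0 := by
        have hterm : ∀ j ∈ Finset.Icc 1 s,
            RatFunc.X ^ ((n:ℤ) - j) * Dx s ((n:ℤ) - j) (k-1)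
            = if j = n ∧ k = 1 then 1 else 0 := by
          intro j hj
          simp only [Finset.mem_Icc] at hj
          rcases lt_trichotomy j n with hlt | heq | hgt
          · rw [show (n:ℤ) - j = ((n-j : ℕ) : ℤ) by omega,
              ih (n-j) (by omega) (by omega) (k-1), mul_zero,
              if_neg (by omega)]
          · subst heq
            rw [show (j:ℤ) - j = 0 by ring, Dx_zero, zpow_zero, one_mul]
            by_cases hk1 : k = 1
            · rw [if_pos (by omega : k - 1 = 0), if_pos ⟨rfl, hk1⟩]
            · rw [if_neg (by omega : ¬ k - 1 = 0), if_neg (by tauto)]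
          · rw [Dx_neg s _ _ (by omega), mul_zero, if_neg (by omega)]
        rw [Finset.sum_congr rfl hterm]
        by_cases hk1 : k = 1
        · simp only [hk1, and_true]
          rw [Finset.sum_ite_eq' (Finset.Icc 1 s) n (fun _ => (1 : RatFunc ℚ))]
          simp only [Finset.mem_Icc]
          congr 1
          simp only [eq_iff_iff]
          omega
        · simp [hk1]
      rw [hprev, hsum]
      ring


/-- The second recurrence: for `n ≥ 1` and `0 ≤ k ≤ n`,
`QB_s(n,k) = q^k QB_s(n-1,k) + ∑_{j=1}^{s} q^{(k-1)j} QB_s(n-j,k-1)`,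
where `q^{(k-1)j}` is an integer power in `ℚ(q)`. -/
theorem QB_second_recurrence (s n k : ℕ) (hs : 1 ≤ s) (hn : 1 ≤ n) (hk : k ≤ n) :
    QB s n (k : ℤ) =
      (RatFunc.X : RatFunc ℚ) ^ k * QBZ s ((n : ℤ) - 1) (k : ℤ) +
        ∑ j ∈ Finset.Icc 1 s,
          (RatFunc.X : RatFunc ℚ) ^ (((k : ℤ) - 1) * j) * QBZ s ((n : ℤ) - j) ((k : ℤ) - 1) := by
  have hD := Dx_eq_zero s hs n hn (k : ℤ)
  unfold Dx at hD
  have hQ : QBZ s (n : ℤ) (k : ℤ) = QB s n (k : ℤ) := QBZ_ofNat s n k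
  have hx : (RatFunc.X : RatFunc ℚ) ^ ((k : ℕ) : ℤ) = (RatFunc.X : RatFunc ℚ) ^ (k : ℕ) :=
    zpow_natCast _ _
  rw [hQ, hx] at hD
  have : QB s n (k : ℤ) = RatFunc.X ^ (k : ℕ) * QBZ s ((n:ℤ)-1) (k : ℤ) + Sx s (k : ℤ) (n : ℤ) := by
    linear_combination hD
  rw [this, Sx]
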